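/- With the partition construction of G and B, set σ = Σ_{S : S induces a forest of G, E_r ⊆ S, |S ∩ E_ℓ| = n} det(B_S), and for x, y > 0 set Z(x,y) = Σ_{S : S induces a forest of G} x^{2|S ∩ E_r|} · y^{2|S ∩ E_ℓ|} · det(B_S). Suppose ε ∈ (0,1) and there is an index set S̃ inducing a forest of G with E_r ⊆ S̃, |S̃ ∩ E_ℓ| = n, and det(B_{S̃}) > 0; put y = (det(B + I) / det(B_{S̃})) · (4/ε) and x = (det(B + I) / det(B_{S̃})) · y^{2m − 2n} · (4/ε). Then x^{2m} · y^{2n} · σ ≤ Z(x,y) ≤ e^{ε/2} · x^{2m} · y^{2n} · σ. -/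

import Mathlib

open scoped Classical

/-- The principal minor of `A` on the index set `S` (equal to `1` when `S = ∅`). -/
noncomputable def principalMinor {ι : Type*} [DecidableEq ι]
    (A : Matrix ι ι ℝ) (S : Finset ι) : ℝ :=
  (A.submatrix (fun i : ↥S => (i : ι)) (fun i : ↥S => (i : ι))).det

/-- The edge of the graph `G` associated with an edge index in `Fin m ⊕ Fin m`:
the left edge `{v_{g j}, w_{g j, j}}` and the right edge `{w_{g j, j}, v_{g j + 1}}`. -/
def partEdge {n m : ℕ} (g : Fin m → Fin n) : (Fin m ⊕ Fin m) → Sym2 (Fin (n + 1) ⊕ Fin m)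
  | Sum.inl j => s(Sum.inl (g j).castSucc, Sum.inr j)
  | Sum.inr j => s(Sum.inr j, Sum.inl (g j).succ)

/-- The spanning subgraph of `G` whose edges are those indexed by `S ⊆ Fin m ⊕ Fin m`. -/
def partSubgraph {n m : ℕ} (g : Fin m → Fin n) (S : Finset (Fin m ⊕ Fin m)) :
    SimpleGraph (Fin (n + 1) ⊕ Fin m) :=
  SimpleGraph.fromEdgeSet (partEdge g '' ↑S)

/-- The matrix `B` of the construction: the left-left block is `A`, the right-right block is
the identity, and the off-diagonal blocks vanish. -/
def matB {m : ℕ} (A : Matrix (Fin m) (Fin m) ℝ) :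
    Matrix (Fin m ⊕ Fin m) (Fin m ⊕ Fin m) ℝ :=
  Matrix.of fun p q =>
    match p, q with
    | Sum.inl j₁, Sum.inl j₂ => A j₁ j₂
    | Sum.inr j, Sum.inr j' => if j = j' then 1 else 0
    | _, _ => 0

/-- The set `E_ℓ` of left edge indices. -/
def leftIdx (m : ℕ) : Finset (Fin m ⊕ Fin m) := Finset.univ.image Sum.inl

/-- The set `E_r` of right edge indices. -/
def rightIdx (m : ℕ) : Finset (Fin m ⊕ Fin m) := Finset.univ.image Sum.inr

/-!
With `x = y ^ (2m - 2n + 1)` every weight `x ^ (2|S ∩ E_r|) * y ^ (2|S ∩ E_ℓ|)` is a power of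
`y ≥ 1`. A forest containing `E_r` has at most `n` left edges, since two left edges `j ≠ j'` with
`g j = g j'` make `w_j` and `w_j'` two common neighbours of `v_{g j}` and `v_{g j + 1}`. Hence the
forests counted in `σ` carry the largest weight `x ^ (2m) * y ^ (2n)`, and every other forest
carries at most `1 / y ^ 2` times that. The principal minors of the positive semidefinite `B` are
nonnegative and sum to `det (B + 1)`, so the other forests contribute at most
`x ^ (2m) * y ^ (2n) * det (B + 1) / y ^ 2`, and the choice of `y` makes
`det (B + 1) / y ^ 2 ≤ (ε / 2) * det B_{S̃} ≤ (ε / 2) * σ`. Finally `1 + ε / 2 ≤ exp (ε / 2)`.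
-/

namespace Matrix

variable {ι : Type*} [DecidableEq ι]

theorem PosSemidef.principalMinor_nonneg {M : Matrix ι ι ℝ} (hM : M.PosSemidef)
    (s : Finset ι) : 0 ≤ principalMinor M s :=
  (hM.submatrix _).det_nonneg

theorem det_add_one_eq_sum_principalMinor [Fintype ι] (M : Matrix ι ι ℝ) :
    (M + 1).det = ∑ s : Finset ι, principalMinor M s :=
  (detRowAlternating.map_add_univ M.row (1 : Matrix ι ι ℝ).row).trans <|
    Finset.sum_congr rfl fun s _ => det_piecewise_one_eq_submatrix_det M s

theorem PosSemidef.sum_principalMinor_le_det_add_one [Fintype ι] {M : Matrix ι ι ℝ}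
    (hM : M.PosSemidef) (T : Finset (Finset ι)) :
    ∑ s ∈ T, principalMinor M s ≤ (M + 1).det := by
  rw [det_add_one_eq_sum_principalMinor]
  exact Finset.sum_le_univ_sum_of_nonneg hM.principalMinor_nonneg

end Matrix

theorem matB_eq_fromBlocks {m : ℕ} (A : Matrix (Fin m) (Fin m) ℝ) :
    matB A = Matrix.fromBlocks A 0 0 1 := by
  ext (i | i) (j | j) <;> simp [matB, Matrix.one_apply]

theorem matB_posSemidef {m : ℕ} {A : Matrix (Fin m) (Fin m) ℝ} (hA : A.PosSemidef) :
    (matB A).PosSemidef := by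
  let _ : Invertible (1 : Matrix (Fin m) (Fin m) ℝ) := invertibleOne
  have := (Matrix.PosDef.fromBlocks₂₂ A (0 : Matrix (Fin m) (Fin m) ℝ)
    (.one : (1 : Matrix (Fin m) (Fin m) ℝ).PosDef)).mpr (by simpa using hA)
  simpa [matB_eq_fromBlocks] using this

theorem SimpleGraph.IsAcyclic.eq_of_adj_of_adj {V : Type*} {G : SimpleGraph V}
    (hG : G.IsAcyclic) {u v w w' : V} (huv : u ≠ v) (huw : G.Adj u w) (hwv : G.Adj w v)
    (huw' : G.Adj u w') (hw'v : G.Adj w' v) : w = w' := by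
  have hpath : ∀ {x}, (hux : G.Adj u x) → (hxv : G.Adj x v) →
      (Walk.cons hux (Walk.cons hxv Walk.nil)).IsPath := fun hux hxv => by
    simp [hux.ne, hxv.ne, huv]
  have := (hG.subsingleton_path u v).elim ⟨_, hpath huw hwv⟩ ⟨_, hpath huw' hw'v⟩
  simp only [Subtype.mk.injEq, Walk.cons.injEq] at this
  exact this.1

section PartitionGraph

variable {n m : ℕ} (g : Fin m → Fin n) {S : Finset (Fin m ⊕ Fin m)}

theorem card_leftIdx : (leftIdx m).card = m := by
  simp [leftIdx, Finset.card_image_of_injective _ Sum.inl_injective]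

theorem card_rightIdx : (rightIdx m).card = m := by
  simp [rightIdx, Finset.card_image_of_injective _ Sum.inr_injective]

theorem partSubgraph_adj_left {j : Fin m} (hj : Sum.inl j ∈ S) :
    (partSubgraph g S).Adj (Sum.inl (g j).castSucc) (Sum.inr j) := by
  rw [partSubgraph, SimpleGraph.fromEdgeSet_adj]
  exact ⟨⟨_, hj, rfl⟩, Sum.inl_ne_inr⟩

theorem partSubgraph_adj_right {j : Fin m} (hj : Sum.inr j ∈ S) :
    (partSubgraph g S).Adj (Sum.inr j) (Sum.inl (g j).succ) := by
  rw [partSubgraph, SimpleGraph.fromEdgeSet_adj]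
  exact ⟨⟨_, hj, rfl⟩, Sum.inr_ne_inl⟩

theorem card_inter_leftIdx_le_of_isAcyclic (hS : (partSubgraph g S).IsAcyclic)
    (hr : rightIdx m ⊆ S) : (S ∩ leftIdx m).card ≤ n := by
  have hinj : Set.InjOn (Sum.elim g g) ↑(S ∩ leftIdx m) := by
    rintro _ hj j' hj' hgj
    simp only [leftIdx, Finset.coe_inter, Set.mem_inter_iff, Finset.mem_coe, Finset.mem_image,
      Finset.mem_univ, true_and] at hj hj'
    obtain ⟨hjS, j, rfl⟩ := hj
    obtain ⟨hj'S, j', rfl⟩ := hj'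
    simp only [Sum.elim_inl] at hgj
    have hr' : ∀ i, Sum.inr i ∈ S := fun i => hr (by simp [rightIdx])
    have := hS.eq_of_adj_of_adj (Sum.inl_injective.ne Fin.castSucc_lt_succ.ne)
      (partSubgraph_adj_left g hjS) (partSubgraph_adj_right g (hr' j))
      (hgj ▸ partSubgraph_adj_left g hj'S) (hgj ▸ partSubgraph_adj_right g (hr' j'))
    rw [Sum.inr_injective this]
  simpa using Finset.card_le_card_of_injOn _ (fun _ _ => Finset.mem_univ _) hinj

end PartitionGraph

theorem forest_weight_mul_sq_le {n m : ℕ} {g : Fin m → Fin n} {S : Finset (Fin m ⊕ Fin m)}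
    (hS : (partSubgraph g S).IsAcyclic)
    (hbad : ¬(rightIdx m ⊆ S ∧ (S ∩ leftIdx m).card = n)) {y : ℝ} (hy : 1 ≤ y) :
    (y ^ (2 * m - 2 * n + 1)) ^ (2 * (S ∩ rightIdx m).card) * y ^ (2 * (S ∩ leftIdx m).card)
      * y ^ 2 ≤ (y ^ (2 * m - 2 * n + 1)) ^ (2 * m) * y ^ (2 * n) := by
  rw [← pow_mul, ← pow_mul, ← pow_add, ← pow_add, ← pow_add]
  refine pow_le_pow_right₀ hy ?_
  set r := (S ∩ rightIdx m).card
  set l := (S ∩ leftIdx m).card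
  have hrm : r ≤ m := card_rightIdx (m := m) ▸ Finset.card_le_card Finset.inter_subset_right
  have hlm : l ≤ m := card_leftIdx (m := m) ▸ Finset.card_le_card Finset.inter_subset_right
  rcases hrm.lt_or_eq with hr | hr
  · have : (2 * m - 2 * n + 1) * (2 * r + 2) ≤ (2 * m - 2 * n + 1) * (2 * m) :=
      Nat.mul_le_mul_left _ (by omega)
    have : 2 * l + 2 ≤ 2 * (2 * m - 2 * n + 1) + 2 * n := by omega
    generalize 2 * m - 2 * n + 1 = a at *
    linarith
  · have hsub : rightIdx m ⊆ S := Finset.inter_eq_right.mp <|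
      Finset.eq_of_subset_of_card_le Finset.inter_subset_right (by rw [card_rightIdx]; omega)
    have : l < n := (card_inter_leftIdx_le_of_isAcyclic g hS hsub).lt_of_ne
      fun hl => hbad ⟨hsub, hl⟩
    rw [hr]
    omega

theorem sum_weight_not_extremal_le {n m : ℕ} {g : Fin m → Fin n}
    {A : Matrix (Fin m) (Fin m) ℝ} (hA : A.PosSemidef) {x y : ℝ} (hy : 1 ≤ y)
    (hx : x = y ^ (2 * m - 2 * n + 1)) (T : Finset (Finset (Fin m ⊕ Fin m)))
    (hT : ∀ S ∈ T, (partSubgraph g S).IsAcyclic ∧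
      ¬(rightIdx m ⊆ S ∧ (S ∩ leftIdx m).card = n)) :
    ∑ S ∈ T, x ^ (2 * (S ∩ rightIdx m).card) * y ^ (2 * (S ∩ leftIdx m).card) *
        principalMinor (matB A) S ≤
      x ^ (2 * m) * y ^ (2 * n) * ((matB A + 1).det / y ^ 2) := by
  have hB := matB_posSemidef hA
  have hy2 : 0 < y ^ 2 := by positivity
  calc _ ≤ ∑ S ∈ T, x ^ (2 * m) * y ^ (2 * n) / y ^ 2 * principalMinor (matB A) S := by
        refine Finset.sum_le_sum fun S hS => mul_le_mul_of_nonneg_right ?_ ?_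
        · rw [le_div_iff₀ hy2, hx]
          exact forest_weight_mul_sq_le (hT S hS).1 (hT S hS).2 hy
        · exact hB.principalMinor_nonneg S
    _ = x ^ (2 * m) * y ^ (2 * n) / y ^ 2 * ∑ S ∈ T, principalMinor (matB A) S :=
        (Finset.mul_sum _ _ _).symm
    _ ≤ x ^ (2 * m) * y ^ (2 * n) / y ^ 2 * (matB A + 1).det := by
        gcongr
        · rw [hx]; positivity
        · exact hB.sum_principalMinor_le_det_add_one T
    _ = _ := by ring

theorem div_sq_le_of_eq_div_mul {K P σ ε y : ℝ} (hP : 0 < P) (hPK : P ≤ K) (hPσ : P ≤ σ)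
    (hε0 : 0 < ε) (hε1 : ε < 1) (hy : y = K / P * (4 / ε)) : K / y ^ 2 ≤ ε / 2 * σ := by
  have hK : 0 < K := hP.trans_le hPK
  calc K / y ^ 2 = P / K * P * (ε ^ 2 / 16) := by rw [hy]; field_simp; ring
    _ ≤ 1 * σ * (ε / 2) := by
        have hPK' : P / K ≤ 1 := div_le_one_of_le₀ hPK hK.le
        have hε : ε ^ 2 / 16 ≤ ε / 2 := by nlinarith
        gcongr
        linarith
    _ = ε / 2 * σ := by ring

theorem sum_forest_weight_bounds {n m : ℕ} (g : Fin m → Fin n)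
    {A : Matrix (Fin m) (Fin m) ℝ} (hA : A.PosSemidef) {x y : ℝ} (hy : 1 ≤ y)
    (hx : x = y ^ (2 * m - 2 * n + 1)) :
    x ^ (2 * m) * y ^ (2 * n) * ∑ S ∈ Finset.univ.filter (fun S : Finset (Fin m ⊕ Fin m) =>
        (partSubgraph g S).IsAcyclic ∧ rightIdx m ⊆ S ∧ (S ∩ leftIdx m).card = n),
      principalMinor (matB A) S ≤
    ∑ S ∈ Finset.univ.filter (fun S : Finset (Fin m ⊕ Fin m) => (partSubgraph g S).IsAcyclic),
      x ^ (2 * (S ∩ rightIdx m).card) * y ^ (2 * (S ∩ leftIdx m).card) * principalMinor (matB A) S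
    ∧ ∑ S ∈ Finset.univ.filter (fun S : Finset (Fin m ⊕ Fin m) => (partSubgraph g S).IsAcyclic),
      x ^ (2 * (S ∩ rightIdx m).card) * y ^ (2 * (S ∩ leftIdx m).card) * principalMinor (matB A) S
    ≤ x ^ (2 * m) * y ^ (2 * n) * ∑ S ∈ Finset.univ.filter (fun S : Finset (Fin m ⊕ Fin m) =>
        (partSubgraph g S).IsAcyclic ∧ rightIdx m ⊆ S ∧ (S ∩ leftIdx m).card = n),
      principalMinor (matB A) S + x ^ (2 * m) * y ^ (2 * n) * ((matB A + 1).det / y ^ 2) := by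
  have hB := matB_posSemidef hA
  set extremal := fun S : Finset (Fin m ⊕ Fin m) => rightIdx m ⊆ S ∧ (S ∩ leftIdx m).card = n
  set forests := Finset.univ.filter fun S : Finset (Fin m ⊕ Fin m) => (partSubgraph g S).IsAcyclic
  set w := fun S : Finset (Fin m ⊕ Fin m) =>
    x ^ (2 * (S ∩ rightIdx m).card) * y ^ (2 * (S ∩ leftIdx m).card) * principalMinor (matB A) S
  have hsplit : ∑ S ∈ forests, w S = x ^ (2 * m) * y ^ (2 * n) *
      ∑ S ∈ forests.filter extremal, principalMinor (matB A) S +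
      ∑ S ∈ forests.filter (¬ extremal ·), w S := by
    rw [← Finset.sum_filter_add_sum_filter_not forests extremal, Finset.mul_sum]
    congr 1
    refine Finset.sum_congr rfl fun S hS => ?_
    obtain ⟨hr, hl⟩ := (Finset.mem_filter.mp hS).2
    simp only [w, Finset.inter_eq_right.mpr hr, card_rightIdx, hl, mul_assoc]
  have hbad := sum_weight_not_extremal_le (g := g) hA hy hx (forests.filter (¬ extremal ·))
    fun S hS => by simpa [forests, extremal] using hS
  have hx0 : 0 ≤ x := hx ▸ pow_nonneg (zero_le_one.trans hy) _
  have hbad0 : 0 ≤ ∑ S ∈ forests.filter (¬ extremal ·), w S :=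
    Finset.sum_nonneg fun S _ => mul_nonneg (by positivity) (hB.principalMinor_nonneg S)
  rw [Finset.filter_filter] at hsplit
  constructor <;> linarith

theorem part_forest_Z_bounds_general {n m : ℕ}
    (g : Fin m → Fin n)
    (A : Matrix (Fin m) (Fin m) ℝ) (hA : A.PosSemidef)
    (ε : ℝ) (hε0 : 0 < ε) (hε1 : ε < 1)
    (St : Finset (Fin m ⊕ Fin m)) (hSt : (partSubgraph g St).IsAcyclic)
    (hStr : rightIdx m ⊆ St) (hStl : (St ∩ leftIdx m).card = n)
    (hStpos : 0 < principalMinor (matB A) St)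
    (x y σ : ℝ) (Z : ℝ → ℝ → ℝ)
    (hy : y = (matB A + 1).det / principalMinor (matB A) St * (4 / ε))
    (hx : x = (matB A + 1).det / principalMinor (matB A) St * y ^ (2 * m - 2 * n) * (4 / ε))
    (hσ : σ = ∑ S ∈ Finset.univ.filter (fun S : Finset (Fin m ⊕ Fin m) =>
        (partSubgraph g S).IsAcyclic ∧ rightIdx m ⊆ S ∧ (S ∩ leftIdx m).card = n),
      principalMinor (matB A) S)
    (hZ : ∀ s t : ℝ, Z s t = ∑ S ∈ Finset.univ.filter (fun S : Finset (Fin m ⊕ Fin m) =>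
        (partSubgraph g S).IsAcyclic),
      s ^ (2 * (S ∩ rightIdx m).card) * t ^ (2 * (S ∩ leftIdx m).card) *
        principalMinor (matB A) S) :
    x ^ (2 * m) * y ^ (2 * n) * σ ≤ Z x y ∧
      Z x y ≤ Real.exp (ε / 2) * (x ^ (2 * m) * y ^ (2 * n) * σ) := by
  have hB := matB_posSemidef hA
  have hPK : principalMinor (matB A) St ≤ (matB A + 1).det := by
    simpa using hB.sum_principalMinor_le_det_add_one {St}
  have hy1 : 1 ≤ y := hy ▸ one_le_mul_of_one_le_of_one_le ((one_le_div hStpos).2 hPK)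
    ((one_le_div hε0).2 (by linarith))
  have hxy : x = y ^ (2 * m - 2 * n + 1) := calc
    x = y ^ (2 * m - 2 * n) * ((matB A + 1).det / principalMinor (matB A) St * (4 / ε)) := by
      rw [hx]; ring
    _ = _ := by rw [← hy, pow_succ]
  have hPσ : principalMinor (matB A) St ≤ σ := hσ ▸ Finset.single_le_sum
    (fun S _ => hB.principalMinor_nonneg S) (by simp [hSt, hStr, hStl])
  have hdet := div_sq_le_of_eq_div_mul hStpos hPK hPσ hε0 hε1 hy
  obtain ⟨hlower, hupper⟩ := sum_forest_weight_bounds g hA hy1 hxy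
  rw [← hσ, ← hZ] at hlower hupper
  have hy0 : 0 ≤ y := zero_le_one.trans hy1
  have hX0 : 0 ≤ x ^ (2 * m) * y ^ (2 * n) := by rw [hxy]; positivity
  refine ⟨hlower, ?_⟩
  calc Z x y ≤ x ^ (2 * m) * y ^ (2 * n) * σ + x ^ (2 * m) * y ^ (2 * n) * (ε / 2 * σ) :=
        hupper.trans (add_le_add le_rfl (mul_le_mul_of_nonneg_left hdet hX0))
    _ = (1 + ε / 2) * (x ^ (2 * m) * y ^ (2 * n) * σ) := by ring
    _ ≤ Real.exp (ε / 2) * (x ^ (2 * m) * y ^ (2 * n) * σ) :=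
        mul_le_mul_of_nonneg_right (by linarith [Real.add_one_le_exp (ε / 2)])
          (mul_nonneg hX0 (hStpos.le.trans hPσ))

/-- For the partition construction, with `σ` the sum of `det (B_S)` over forests containing
`E_r` with `|S ∩ E_ℓ| = n`, and `Z x y` the forest DPP normalizing constant of the rescaled
matrix, the choices `y = det(B + I)/det(B_{S̃}) · (4/ε)` and
`x = det(B + I)/det(B_{S̃}) · y^{2m-2n} · (4/ε)` give
`x^{2m} y^{2n} σ ≤ Z x y ≤ e^{ε/2} x^{2m} y^{2n} σ`. -/
theorem part_forest_Z_bounds {n m : ℕ} (hn : 1 ≤ n) (hm : 1 ≤ m) (hnm : n ≤ m)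
    (g : Fin m → Fin n) (hg : Function.Surjective g)
    (A : Matrix (Fin m) (Fin m) ℝ) (hA : A.PosSemidef)
    (ε : ℝ) (hε0 : 0 < ε) (hε1 : ε < 1)
    (St : Finset (Fin m ⊕ Fin m)) (hSt : (partSubgraph g St).IsAcyclic)
    (hStr : rightIdx m ⊆ St) (hStl : (St ∩ leftIdx m).card = n)
    (hStpos : 0 < principalMinor (matB A) St)
    (x y σ : ℝ) (Z : ℝ → ℝ → ℝ)
    (hy : y = (matB A + 1).det / principalMinor (matB A) St * (4 / ε))
    (hx : x = (matB A + 1).det / principalMinor (matB A) St * y ^ (2 * m - 2 * n) * (4 / ε))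
    (hσ : σ = ∑ S ∈ Finset.univ.filter (fun S : Finset (Fin m ⊕ Fin m) =>
        (partSubgraph g S).IsAcyclic ∧ rightIdx m ⊆ S ∧ (S ∩ leftIdx m).card = n),
      principalMinor (matB A) S)
    (hZ : ∀ s t : ℝ, Z s t = ∑ S ∈ Finset.univ.filter (fun S : Finset (Fin m ⊕ Fin m) =>
        (partSubgraph g S).IsAcyclic),
      s ^ (2 * (S ∩ rightIdx m).card) * t ^ (2 * (S ∩ leftIdx m).card) *
        principalMinor (matB A) S) :
    x ^ (2 * m) * y ^ (2 * n) * σ ≤ Z x y ∧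
      Z x y ≤ Real.exp (ε / 2) * (x ^ (2 * m) * y ^ (2 * n) * σ) :=
  part_forest_Z_bounds_general g A hA ε hε0 hε1 St hSt hStr hStl hStpos x y σ Z hy hx hσ hZ
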